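/- arXiv:2403.19810 — 4 statements merged into one kernel-verified Lean document; each statement's English description precedes it below -/
import Mathlib

section
/- For 1 < r < 2 and all ξ, η ∈ ℝ^N not both zero, (|ξ| + |η|)^{2-r} (|ξ|^{r-2} ξ - |η|^{r-2} η) · (ξ - η) ≥ (r-1) |ξ - η|^2. -/
open scoped RealInnerProductSpace

private lemma subadd_rpow {a b p : ℝ} (ha : 0 ≤ a) (hb : 0 ≤ b) (hp : 0 ≤ p) (hp1 : p ≤ 1) :
    (a + b) ^ p ≤ a ^ p + b ^ p := by
  have h := NNReal.rpow_add_le_add_rpow a.toNNReal b.toNNReal hp hp1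
  have := Real.toNNReal_add ha hb
  rw [← this] at h
  have h2 : ((((a+b).toNNReal) ^ p : NNReal) : ℝ) ≤ ((a.toNNReal ^ p + b.toNNReal ^ p : NNReal) : ℝ) := by
    exact_mod_cast h
  rwa [NNReal.coe_add, NNReal.coe_rpow, NNReal.coe_rpow, NNReal.coe_rpow,
    Real.coe_toNNReal _ (by linarith), Real.coe_toNNReal _ ha, Real.coe_toNNReal _ hb] at h2

private lemma bern_step {r a b : ℝ} (hr1 : 1 < r) (hr2 : r < 2) (hb : 0 < b) (hab : b ≤ a) :
    (r - 1) * (a ^ (r - 2) * (a - b)) ≤ a ^ (r - 1) - b ^ (r - 1) := by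
  have ha : 0 < a := lt_of_lt_of_le hb hab
  have hba : (0:ℝ) < b / a := div_pos hb ha
  have hB := rpow_one_add_le_one_add_mul_self (s := b / a - 1) (by linarith) (p := r - 1)
    (by linarith) (by linarith)
  rw [show 1 + (b / a - 1) = b / a by ring] at hB
  have h1 : b ^ (r - 1) = a ^ (r - 1) * (b / a) ^ (r - 1) := by
    rw [← Real.mul_rpow ha.le hba.le, mul_div_cancel₀ _ (ne_of_gt ha)]
  have h2 : a ^ (r - 1) = a ^ (r - 2) * a := by
    rw [show r - 1 = (r - 2) + 1 by ring, Real.rpow_add ha, Real.rpow_one]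
  have h3 : a ^ (r - 1) * (b / a) = a ^ (r - 2) * b := by
    rw [h2]; field_simp
  have hApos : (0:ℝ) < a ^ (r - 1) := Real.rpow_pos_of_pos ha _
  have h4 : b ^ (r - 1) ≤ a ^ (r - 1) * (1 + (r - 1) * (b / a - 1)) := by
    rw [h1]; exact mul_le_mul_of_nonneg_left hB hApos.le
  have h5 : a ^ (r - 1) * (1 + (r - 1) * (b / a - 1))
      = a ^ (r - 1) + (r - 1) * (a ^ (r - 2) * b - a ^ (r - 1)) := by
    have : a ^ (r - 1) * ((r-1) * (b/a)) = (r-1) * (a ^ (r-2) * b) := by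
      rw [← mul_assoc, mul_comm (a ^ (r-1)) (r-1), mul_assoc, h3]
    nlinarith [this]
  nlinarith [h4, h5, h2]

private lemma E1h {r a b : ℝ} (hr1 : 1 < r) (hr2 : r < 2) (hb : 0 < b) (hab : b ≤ a) :
    (r - 1) * (a - b) ^ 2 ≤ (a + b) ^ (2 - r) * ((a ^ (r - 2) * a - b ^ (r - 2) * b) * (a - b)) := by
  have ha : 0 < a := lt_of_lt_of_le hb hab
  have hs : 0 < a + b := by linarith
  have h2a : a ^ (r - 2) * a = a ^ (r - 1) := by
    rw [show r - 1 = (r - 2) + 1 by ring, Real.rpow_add ha, Real.rpow_one]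
  have h2b : b ^ (r - 2) * b = b ^ (r - 1) := by
    rw [show r - 1 = (r - 2) + 1 by ring, Real.rpow_add hb, Real.rpow_one]
  rw [h2a, h2b]
  have hbern := bern_step hr1 hr2 hb hab
  have hcmp : (a + b) ^ (r - 2) ≤ a ^ (r - 2) :=
    Real.rpow_le_rpow_of_nonpos ha (by linarith) (by linarith)
  have hST : (a + b) ^ (2 - r) * (a + b) ^ (r - 2) = 1 := by
    rw [← Real.rpow_add hs]; norm_num
  have hSpos : (0:ℝ) < (a + b) ^ (2 - r) := Real.rpow_pos_of_pos hs _
  have hd : 0 ≤ a - b := by linarith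
  have step1 : (r - 1) * ((a + b) ^ (r - 2) * (a - b)) ≤ a ^ (r - 1) - b ^ (r - 1) := by
    nlinarith [mul_le_mul_of_nonneg_right hcmp hd]
  have step2 : (a + b) ^ (2 - r) * ((r - 1) * ((a + b) ^ (r - 2) * (a - b)) * (a - b))
      ≤ (a + b) ^ (2 - r) * ((a ^ (r - 1) - b ^ (r - 1)) * (a - b)) := by
    apply mul_le_mul_of_nonneg_left _ hSpos.le
    exact mul_le_mul_of_nonneg_right step1 hd
  calc (r - 1) * (a - b) ^ 2
      = (a + b) ^ (2 - r) * ((r - 1) * ((a + b) ^ (r - 2) * (a - b)) * (a - b)) := by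
        rw [show (a + b) ^ (2 - r) * ((r - 1) * ((a + b) ^ (r - 2) * (a - b)) * (a - b))
          = ((a + b) ^ (2 - r) * (a + b) ^ (r - 2)) * ((r - 1) * ((a - b) * (a - b))) by ring,
          hST]; ring
    _ ≤ (a + b) ^ (2 - r) * ((a ^ (r - 1) - b ^ (r - 1)) * (a - b)) := step2

private lemma E2h {r a b : ℝ} (hr1 : 1 < r) (hr2 : r < 2) (ha : 0 < a) (hb : 0 < b) :
    (r - 1) * (a + b) ^ 2 ≤ (a + b) ^ (2 - r) * ((a ^ (r - 2) * a + b ^ (r - 2) * b) * (a + b)) := by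
  have hs : 0 < a + b := by linarith
  have h2a : a ^ (r - 2) * a = a ^ (r - 1) := by
    rw [show r - 1 = (r - 2) + 1 by ring, Real.rpow_add ha, Real.rpow_one]
  have h2b : b ^ (r - 2) * b = b ^ (r - 1) := by
    rw [show r - 1 = (r - 2) + 1 by ring, Real.rpow_add hb, Real.rpow_one]
  rw [h2a, h2b]
  have hsub : (a + b) ^ (r - 1) ≤ a ^ (r - 1) + b ^ (r - 1) :=
    subadd_rpow ha.le hb.le (by linarith) (by linarith)
  have hid : (a + b) ^ (2 - r) * ((a + b) ^ (r - 1) * (a + b)) = (a + b) ^ 2 := by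
    rw [show (a+b) ^ (2-r) * ((a+b) ^ (r-1) * (a+b)) = (a+b) ^ (2-r) * (a+b) ^ (r-1) * (a+b) by ring,
      ← Real.rpow_add hs, show (2-r) + (r-1) = 1 by ring, Real.rpow_one, sq]
  have hSpos : (0:ℝ) < (a + b) ^ (2 - r) := Real.rpow_pos_of_pos hs _
  have step : (a + b) ^ (2 - r) * ((a + b) ^ (r - 1) * (a + b))
      ≤ (a + b) ^ (2 - r) * ((a ^ (r - 1) + b ^ (r - 1)) * (a + b)) := by
    apply mul_le_mul_of_nonneg_left _ hSpos.le
    exact mul_le_mul_of_nonneg_right hsub hs.le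
  rw [hid] at step
  nlinarith [sq_nonneg (a + b)]

private lemma key {r a b t : ℝ} (hr1 : 1 < r) (hr2 : r < 2) (ha : 0 < a) (hb : 0 < b)
    (ht1 : t ≤ a * b) (ht2 : -(a * b) ≤ t) :
    (r - 1) * (a ^ 2 - 2 * t + b ^ 2) ≤
      (a + b) ^ (2 - r) * (a ^ (r - 2) * a ^ 2 + b ^ (r - 2) * b ^ 2 - (a ^ (r - 2) + b ^ (r - 2)) * t) := by
  set S := (a + b) ^ (2 - r) with hS
  set P := a ^ (r - 2) with hP
  set Q := b ^ (r - 2) with hQ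
  have hE2 := E2h (a := a) (b := b) hr1 hr2 ha hb
  have hE1 : (r - 1) * (a - b) ^ 2 ≤ S * ((P * a - Q * b) * (a - b)) := by
    rcases le_total b a with h | h
    · exact E1h hr1 hr2 hb h
    · have := E1h (a := b) (b := a) hr1 hr2 ha h
      rw [show b + a = a + b by ring] at this
      calc (r - 1) * (a - b) ^ 2 = (r - 1) * (b - a) ^ 2 := by ring
        _ ≤ (a + b) ^ (2-r) * ((b ^ (r-2) * b - a ^ (r-2) * a) * (b - a)) := this
        _ = S * ((P * a - Q * b) * (a - b)) := by rw [hS, hP, hQ]; ring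
  rcases le_total (S * (P + Q)) (2 * (r - 1)) with h | h
  · -- minimum at t = -ab
    nlinarith [mul_le_mul_of_nonneg_right (sub_nonneg.2 h) (by linarith : (0:ℝ) ≤ t + a * b), hE2]
  · nlinarith [mul_le_mul_of_nonneg_right (sub_nonneg.2 h) (by linarith : (0:ℝ) ≤ a * b - t), hE1]

theorem monotone_inequality_r_lt_two (N : ℕ) (r : ℝ) (hr1 : 1 < r) (hr2 : r < 2)
    (ξ η : EuclideanSpace ℝ (Fin N)) (hne : 0 < ‖ξ‖ + ‖η‖) :
    (‖ξ‖ + ‖η‖) ^ (2 - r) * ⟪(‖ξ‖ ^ (r - 2)) • ξ - (‖η‖ ^ (r - 2)) • η, ξ - η⟫ ≥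
      (r - 1) * ‖ξ - η‖ ^ 2 := by
  rcases eq_or_lt_of_le (norm_nonneg ξ) with hξ | hξ
  · -- ξ = 0
    have hξ0 : ξ = 0 := by rwa [eq_comm, norm_eq_zero] at hξ
    subst hξ0
    have hη : 0 < ‖η‖ := by simpa using hne
    have h1 : ‖η‖ ^ (2 - r) * ‖η‖ ^ (r - 2) = 1 := by
      rw [← Real.rpow_add hη]; norm_num
    have hin : ⟪(‖(0 : EuclideanSpace ℝ (Fin N))‖ ^ (r - 2)) • (0 : EuclideanSpace ℝ (Fin N))
        - (‖η‖ ^ (r - 2)) • η, (0 : EuclideanSpace ℝ (Fin N)) - η⟫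
        = ‖η‖ ^ (r - 2) * ‖η‖ ^ 2 := by
      rw [smul_zero, zero_sub, zero_sub, inner_neg_neg, real_inner_smul_left,
        real_inner_self_eq_norm_sq]
    rw [ge_iff_le, hin]
    have h2 : (‖(0 : EuclideanSpace ℝ (Fin N))‖ + ‖η‖) ^ (2 - r) * (‖η‖ ^ (r - 2) * ‖η‖ ^ 2)
        = ‖η‖ ^ 2 := by
      rw [norm_zero, zero_add, ← mul_assoc, h1, one_mul]
    rw [h2]
    have h3 : ‖(0 : EuclideanSpace ℝ (Fin N)) - η‖ = ‖η‖ := by simp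
    rw [h3]
    nlinarith [sq_nonneg ‖η‖]
  · rcases eq_or_lt_of_le (norm_nonneg η) with hη | hη
    · -- η = 0
      have hη0 : η = 0 := by rwa [eq_comm, norm_eq_zero] at hη
      subst hη0
      have h1 : ‖ξ‖ ^ (2 - r) * ‖ξ‖ ^ (r - 2) = 1 := by
        rw [← Real.rpow_add hξ]; norm_num
      have hin : ⟪(‖ξ‖ ^ (r - 2)) • ξ
          - (‖(0 : EuclideanSpace ℝ (Fin N))‖ ^ (r - 2)) • (0 : EuclideanSpace ℝ (Fin N)),
          ξ - (0 : EuclideanSpace ℝ (Fin N))⟫ = ‖ξ‖ ^ (r - 2) * ‖ξ‖ ^ 2 := by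
        rw [smul_zero, sub_zero, sub_zero, real_inner_smul_left, real_inner_self_eq_norm_sq]
      rw [ge_iff_le, hin]
      have h2 : (‖ξ‖ + ‖(0 : EuclideanSpace ℝ (Fin N))‖) ^ (2 - r) * (‖ξ‖ ^ (r - 2) * ‖ξ‖ ^ 2)
          = ‖ξ‖ ^ 2 := by
        rw [norm_zero, add_zero, ← mul_assoc, h1, one_mul]
      rw [h2]
      have h3 : ‖ξ - (0 : EuclideanSpace ℝ (Fin N))‖ = ‖ξ‖ := by simp
      rw [h3]
      nlinarith [sq_nonneg ‖ξ‖]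
    · have hexp : ⟪(‖ξ‖ ^ (r - 2)) • ξ - (‖η‖ ^ (r - 2)) • η, ξ - η⟫
          = ‖ξ‖ ^ (r - 2) * ‖ξ‖ ^ 2 + ‖η‖ ^ (r - 2) * ‖η‖ ^ 2
            - (‖ξ‖ ^ (r - 2) + ‖η‖ ^ (r - 2)) * ⟪ξ, η⟫ := by
        simp only [inner_sub_left, inner_sub_right, real_inner_smul_left,
          real_inner_self_eq_norm_sq, real_inner_comm η ξ]
        try ring
      have hnorm : ‖ξ - η‖ ^ 2 = ‖ξ‖ ^ 2 - 2 * ⟪ξ, η⟫ + ‖η‖ ^ 2 := by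
        rw [@norm_sub_sq_real]
      rw [hexp, hnorm, ge_iff_le]
      have habs := abs_real_inner_le_norm ξ η
      have ht1 : ⟪ξ, η⟫ ≤ ‖ξ‖ * ‖η‖ := (abs_le.mp habs).2
      have ht2 : -(‖ξ‖ * ‖η‖) ≤ ⟪ξ, η⟫ := (abs_le.mp habs).1
      exact key hr1 hr2 hξ hη ht1 ht2
end

section
/- For 1 < r < 2 and all ξ, η ∈ ℝ^N not both zero, (|ξ|^{r-2} ξ - |η|^{r-2} η) · (ξ - η) ≥ (r-1)(|ξ| + |η|)^{r-2} |ξ - η|^2. -/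
open scoped RealInnerProductSpace

/-- Concavity step: for `0 < p < 1`, `0 ≤ b ≤ a`, `0 < a`, we have
`a^p - b^p ≥ p * a^(p-1) * (a - b)`. -/
lemma concave_tangent (p a b : ℝ) (hp0 : 0 < p) (hp1 : p < 1)
    (hb : 0 ≤ b) (hba : b ≤ a) (ha : 0 < a) :
    p * a ^ (p - 1) * (a - b) ≤ a ^ p - b ^ p := by
  have hx0 : 0 ≤ b / a := div_nonneg hb ha.le
  have hgm : (b / a) ^ p * 1 ^ (1 - p) ≤ p * (b / a) + (1 - p) * 1 :=
    Real.geom_mean_le_arith_mean2_weighted hp0.le (by linarith) hx0 zero_le_one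
      (by ring)
  have h1 : (b / a) ^ p ≤ p * (b / a) + (1 - p) := by
    simpa using hgm
  have hap : (0:ℝ) < a ^ p := Real.rpow_pos_of_pos ha p
  have hbp : b ^ p = a ^ p * (b / a) ^ p := by
    rw [← Real.mul_rpow ha.le hx0]
    congr 1
    field_simp
  have ham : a ^ (p - 1) * a = a ^ p := by
    rw [← Real.rpow_add_one ha.ne' (p - 1)]
    ring_nf
  have ham2 : a ^ (p - 1) = a ^ p / a := by
    field_simp [← ham]
    exact ham
  have key : a ^ p - b ^ p ≥ a ^ p * (1 - (p * (b / a) + (1 - p))) := by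
    rw [hbp]
    have := mul_le_mul_of_nonneg_left h1 hap.le
    linarith
  have : a ^ p * (1 - (p * (b / a) + (1 - p))) = p * a ^ (p - 1) * (a - b) := by
    rw [ham2]
    field_simp
    ring
  linarith

/-- Endpoint `t = ab`: `(a-b)(a^{r-1}-b^{r-1}) ≥ (r-1)(a+b)^{r-2}(a-b)^2`, assuming `b ≤ a`. -/
lemma key1aux (r a b : ℝ) (hr1 : 1 < r) (hr2 : r < 2)
    (hb : 0 ≤ b) (hba : b ≤ a) (ha : 0 < a) :
    (r - 1) * (a + b) ^ (r - 2) * (a - b) ^ 2 ≤ (a - b) * (a ^ (r - 1) - b ^ (r - 1)) := by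
  have hp0 : 0 < r - 1 := by linarith
  have hp1 : r - 1 < 1 := by linarith
  have hstep := concave_tangent (r - 1) a b hp0 hp1 hb hba ha
  have hmono : (a + b) ^ (r - 2) ≤ a ^ (r - 2) := by
    have := Real.rpow_le_rpow_of_nonpos ha (by linarith : a ≤ a + b) (by linarith : r - 2 ≤ 0)
    exact this
  have he : r - 1 - 1 = r - 2 := by ring
  rw [he] at hstep
  have hab2 : 0 ≤ (a - b) := by linarith
  -- multiply hstep by (a-b) ≥ 0
  have h2 : (r - 1) * a ^ (r - 2) * (a - b) ^ 2 ≤ (a - b) * (a ^ (r - 1) - b ^ (r - 1)) := by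
    have := mul_le_mul_of_nonneg_left hstep hab2
    nlinarith [this]
  have h3 : (r - 1) * (a + b) ^ (r - 2) * (a - b) ^ 2 ≤ (r - 1) * a ^ (r - 2) * (a - b) ^ 2 := by
    have hsq : 0 ≤ (a - b) ^ 2 := sq_nonneg _
    nlinarith [mul_le_mul_of_nonneg_left hmono hp0.le]
  linarith

lemma key1 (r a b : ℝ) (hr1 : 1 < r) (hr2 : r < 2)
    (ha : 0 ≤ a) (hb : 0 ≤ b) (hab : 0 < a + b) :
    (r - 1) * (a + b) ^ (r - 2) * (a - b) ^ 2 ≤ (a - b) * (a ^ (r - 1) - b ^ (r - 1)) := by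
  rcases le_total b a with h | h
  · exact key1aux r a b hr1 hr2 hb h (by linarith)
  · have := key1aux r b a hr1 hr2 ha h (by linarith)
    have hcomm : b + a = a + b := by ring
    rw [hcomm] at this
    nlinarith [this]

/-- Real subadditivity of `x ↦ x^p` for `0 ≤ p ≤ 1`. -/
lemma rpow_subadd (p a b : ℝ) (ha : 0 ≤ a) (hb : 0 ≤ b) (hp : 0 ≤ p) (hp1 : p ≤ 1) :
    (a + b) ^ p ≤ a ^ p + b ^ p := by
  have h := NNReal.rpow_add_le_add_rpow a.toNNReal b.toNNReal hp hp1
  have := NNReal.coe_le_coe.mpr h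
  simpa [NNReal.coe_rpow, ← Real.toNNReal_add ha hb, Real.coe_toNNReal _ ha,
    Real.coe_toNNReal _ hb, Real.coe_toNNReal _ (by positivity : (0:ℝ) ≤ a + b)] using this

/-- Endpoint `t = -ab`. -/
lemma key2 (r a b : ℝ) (hr1 : 1 < r) (hr2 : r < 2)
    (ha : 0 ≤ a) (hb : 0 ≤ b) (hab : 0 < a + b) :
    (r - 1) * (a + b) ^ (r - 2) * (a + b) ^ 2 ≤ (a + b) * (a ^ (r - 1) + b ^ (r - 1)) := by
  have hsub := rpow_subadd (r - 1) a b ha hb (by linarith) (by linarith)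
  have h1 : (a + b) ^ (r - 2) * (a + b) = (a + b) ^ (r - 1) := by
    rw [← Real.rpow_add_one hab.ne' (r - 2)]
    ring_nf
  have h2 : (r - 1) * (a + b) ^ (r - 2) * (a + b) ^ 2
      = (a + b) * ((r - 1) * (a + b) ^ (r - 1)) := by
    rw [← h1]; ring
  rw [h2]
  have hX : (0:ℝ) ≤ (a + b) ^ (r - 1) := Real.rpow_nonneg hab.le _
  have : (r - 1) * (a + b) ^ (r - 1) ≤ a ^ (r - 1) + b ^ (r - 1) := by
    nlinarith
  nlinarith [hab.le]

/-- Scalar version of the main inequality. -/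
lemma scalar_main (r a b t : ℝ) (hr1 : 1 < r) (hr2 : r < 2)
    (ha : 0 ≤ a) (hb : 0 ≤ b) (hab : 0 < a + b)
    (ht1 : t ≤ a * b) (ht2 : -(a * b) ≤ t) :
    (r - 1) * (a + b) ^ (r - 2) * (a ^ 2 + b ^ 2 - 2 * t) ≤
      a ^ (r - 2) * a ^ 2 + b ^ (r - 2) * b ^ 2 - (a ^ (r - 2) + b ^ (r - 2)) * t := by
  set α := a ^ (r - 2) with hα
  set β := b ^ (r - 2) with hβ
  set K := (r - 1) * (a + b) ^ (r - 2) with hK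
  have hne1 : r - 2 + 1 ≠ 0 := by intro h; linarith
  have heq : r - 1 = r - 2 + 1 := by ring
  have hA : α * a = a ^ (r - 1) := by
    rw [hα, heq, Real.rpow_add' ha hne1, Real.rpow_one]
  have hB : β * b = b ^ (r - 1) := by
    rw [hβ, heq, Real.rpow_add' hb hne1, Real.rpow_one]
  rcases le_total (2 * K) (α + β) with hs | hs
  · -- slope nonpositive: use endpoint t = ab
    have hk1 := key1 r a b hr1 hr2 ha hb hab
    rw [← hA, ← hB] at hk1
    nlinarith [mul_nonneg (by linarith : (0:ℝ) ≤ α + β - 2 * K) (by linarith : (0:ℝ) ≤ a * b - t)]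
  · -- slope nonnegative: use endpoint t = -ab
    have hk2 := key2 r a b hr1 hr2 ha hb hab
    rw [← hA, ← hB] at hk2
    nlinarith [mul_nonneg (by linarith : (0:ℝ) ≤ 2 * K - (α + β)) (by linarith : (0:ℝ) ≤ t + a * b)]

theorem monotone_inequality_r_lt_two' (N : ℕ) (r : ℝ) (hr1 : 1 < r) (hr2 : r < 2)
    (ξ η : EuclideanSpace ℝ (Fin N)) (hne : 0 < ‖ξ‖ + ‖η‖) :
    ⟪(‖ξ‖ ^ (r - 2)) • ξ - (‖η‖ ^ (r - 2)) • η, ξ - η⟫ ≥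
      (r - 1) * (‖ξ‖ + ‖η‖) ^ (r - 2) * ‖ξ - η‖ ^ 2 := by
  set a := ‖ξ‖ with haa
  set b := ‖η‖ with hbb
  set t := ⟪ξ, η⟫ with htt
  have ha : 0 ≤ a := norm_nonneg _
  have hb : 0 ≤ b := norm_nonneg _
  have hcs : |t| ≤ a * b := abs_real_inner_le_norm ξ η
  have ht1 : t ≤ a * b := (le_abs_self t).trans hcs
  have ht2 : -(a * b) ≤ t := by
    have := (neg_abs_le t)
    linarith [abs_nonneg t, hcs, this]
  have hnorm : ‖ξ - η‖ ^ 2 = a ^ 2 - 2 * t + b ^ 2 := norm_sub_sq_real ξ η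
  have hexp : ⟪(a ^ (r - 2)) • ξ - (b ^ (r - 2)) • η, ξ - η⟫
      = a ^ (r - 2) * a ^ 2 + b ^ (r - 2) * b ^ 2 - (a ^ (r - 2) + b ^ (r - 2)) * t := by
    simp only [inner_sub_left, inner_sub_right, real_inner_smul_left,
      real_inner_self_eq_norm_sq, ← haa, ← hbb, ← htt]
    have hsym : (inner ℝ η ξ : ℝ) = t := (real_inner_comm η ξ).symm
    rw [hsym]
    ring
  rw [hexp, hnorm, ge_iff_le]
  have := scalar_main r a b t hr1 hr2 ha hb hne ht1 ht2
  nlinarith [this]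
end

section
/- Let φ : [0,∞) → [0,∞) be a convex Φ-function (convex, φ(0)=0, increasing, finite, left-continuous) that is C² on (0,∞) and strictly increasing, and suppose there exist C₁, C₂ > 0 with C₁ φ'(t) ≤ t φ''(t) ≤ C₂ φ'(t) for all t > 0. If moreover φ'' is increasing on (0,∞), then for all ξ, η ∈ ℝ^N, (a_φ(ξ) − a_φ(η)) · (ξ − η) ≥ φ''(|ξ − η|) |ξ − η|² / C, for C > 0 depending only on C₁, C₂, where a_φ(ξ) = φ'(|ξ|) ξ/|ξ| (and a_φ(0)=0). -/
open scoped RealInnerProductSpace Classical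

/-- `a_φ(ξ) = φ'(|ξ|) ξ / |ξ|`, with `a_φ(0) = 0`. -/
noncomputable def aPhi {N : ℕ} (φ' : ℝ → ℝ) (ξ : EuclideanSpace ℝ (Fin N)) :
    EuclideanSpace ℝ (Fin N) :=
  if ξ = 0 then 0 else (φ' ‖ξ‖ / ‖ξ‖) • ξ

set_option maxHeartbeats 1000000 in

lemma keyScalar (φ' φ'' : ℝ → ℝ) (C₂ K : ℝ) (hC₂ : 0 < C₂) (hK : 0 < K)
    (hp : ∀ t, 0 < t → 0 < φ' t)
    (hpp : ∀ t, 0 < t → 0 ≤ φ'' t)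
    (hm1 : MonotoneOn φ' (Set.Ioi 0))
    (hm2 : MonotoneOn φ'' (Set.Ioi 0))
    (hdbl : ∀ t, 0 < t → φ'' (2*t) ≤ K * φ'' t)
    (hcomp2 : ∀ t, 0 < t → t * φ'' t ≤ C₂ * φ' t)
    (hmvt : ∀ a b, 0 < a → a < b → ∃ c, a < c ∧ c < b ∧ φ' b - φ' a = φ'' c * (b - a))
    (r s u d : ℝ) (hs : 0 < s) (hsr : s ≤ r) (hu : u ≤ r * s)
    (hd2 : d ^ 2 = (r - s) ^ 2 + 2 * (r * s - u)) (hd : 0 < d) (hdrs : d ≤ r + s) :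
    φ' r * r + φ' s * s - (φ' r / r + φ' s / s) * u
      ≥ φ'' d * d ^ 2 / (K * max (4 * K) (2 * C₂)) := by
  have hr : 0 < s := hs
  have hrpos : 0 < r := lt_of_lt_of_le hs hsr
  set A := (r - s) ^ 2 with hA
  set B := 2 * (r * s - u) with hB
  have hAnn : 0 ≤ A := sq_nonneg _
  have hBnn : 0 ≤ B := by simp only [hB]; linarith
  set M := max (4 * K) (2 * C₂) with hM
  have hMpos : 0 < M := lt_max_of_lt_left (by linarith)
  have hM1 : 4 * K ≤ M := le_max_left _ _
  have hM2 : 2 * C₂ ≤ M := le_max_right _ _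
  have hppr : 0 ≤ φ'' r := hpp r hrpos
  -- half doubling
  have hhalf : φ'' r ≤ K * φ'' (r / 2) := by
    have := hdbl (r / 2) (by linarith)
    have h2 : 2 * (r / 2) = r := by ring
    rwa [h2] at this
  -- T1 bound
  have hT1 : φ'' r * A / (4 * K) ≤ (φ' r - φ' s) * (r - s) := by
    rcases eq_or_lt_of_le hsr with heq | hlt
    · subst heq; simp [hA]
    · rcases le_or_gt (r / 2) s with hcase | hcase
      · obtain ⟨c, hc1, hc2, hc3⟩ := hmvt s r hs hlt
        have hcc : φ'' (r / 2) ≤ φ'' c :=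
          hm2 (Set.mem_Ioi.2 (by linarith)) (Set.mem_Ioi.2 (by linarith)) (by linarith)
        have h1 : φ'' r / K ≤ φ'' c := by
          rw [div_le_iff₀ hK]
          nlinarith [hpp (r/2) (by linarith : (0:ℝ) < r/2)]
        have h5 : φ'' r / K * ((r - s) * (r - s)) ≤ φ'' c * ((r - s) * (r - s)) :=
          mul_le_mul_of_nonneg_right h1 (mul_self_nonneg _)
        have hA' : A = (r - s) * (r - s) := by rw [hA]; ring
        calc φ'' r * A / (4 * K) ≤ φ'' r * A / K := by
              apply div_le_div_of_nonneg_left (mul_nonneg hppr hAnn) hK (by linarith)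
          _ = φ'' r / K * ((r - s) * (r - s)) := by rw [hA']; ring
          _ ≤ φ'' c * ((r - s) * (r - s)) := h5
          _ = (φ' r - φ' s) * (r - s) := by rw [hc3]; ring
      · -- s < r/2
        obtain ⟨c, hc1, hc2, hc3⟩ := hmvt (r / 2) r (by linarith) (by linarith)
        have hcc : φ'' (r / 2) ≤ φ'' c :=
          hm2 (Set.mem_Ioi.2 (by linarith)) (Set.mem_Ioi.2 (by linarith)) (by linarith)
        have h1 : φ'' r / K ≤ φ'' c := by
          rw [div_le_iff₀ hK]
          nlinarith [hpp (r/2) (by linarith : (0:ℝ) < r/2)]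
        have hps : φ' s ≤ φ' (r / 2) :=
          hm1 (Set.mem_Ioi.2 hs) (Set.mem_Ioi.2 (by linarith)) (by linarith)
        have hstep : φ'' r / K * (r / 2) ≤ φ' r - φ' (r / 2) := by
          rw [hc3]
          have : r - r / 2 = r / 2 := by ring
          rw [this]
          exact mul_le_mul_of_nonneg_right h1 (by linarith)
        have hAr : A ≤ r ^ 2 := by
          rw [hA]; nlinarith [hs, hsr]
        have hnn : 0 ≤ φ' r - φ' (r / 2) := by
          have := hm1 (Set.mem_Ioi.2 (by linarith : (0:ℝ) < r/2)) (Set.mem_Ioi.2 hrpos) (by linarith)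
          linarith
        have hrK : 0 ≤ φ'' r / K := div_nonneg hppr hK.le
        calc φ'' r * A / (4 * K) ≤ φ'' r * r ^ 2 / (4 * K) := by
              apply div_le_div_of_nonneg_right (mul_le_mul_of_nonneg_left hAr hppr) (by linarith)
          _ = (φ'' r / K * (r / 2)) * (r / 2) := by field_simp; ring
          _ ≤ (φ' r - φ' (r / 2)) * (r / 2) := mul_le_mul_of_nonneg_right hstep (by linarith)
          _ ≤ (φ' r - φ' s) * (r - s) := by
              have e1 : (φ' r - φ' (r/2)) * (r / 2) ≤ (φ' r - φ' (r/2)) * (r - s) :=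
                mul_le_mul_of_nonneg_left (by linarith) hnn
              have e2 : (φ' r - φ' (r/2)) * (r - s) ≤ (φ' r - φ' s) * (r - s) :=
                mul_le_mul_of_nonneg_right (by linarith) (by linarith)
              linarith
  -- T2 bound
  have hT2 : φ'' r * B / (2 * C₂) ≤ (φ' r / r + φ' s / s) * (r * s - u) := by
    have h1 : φ'' r / C₂ ≤ φ' r / r := by
      rw [div_le_div_iff₀ hC₂ hrpos]
      have := hcomp2 r hrpos
      linarith
    have h2 : 0 ≤ φ' s / s := le_of_lt (div_pos (hp s hs) hs)
    have h3 : φ'' r / C₂ * (r * s - u) ≤ (φ' r / r) * (r * s - u) :=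
      mul_le_mul_of_nonneg_right h1 (by linarith)
    have h4 : φ'' r * B / (2 * C₂) = φ'' r / C₂ * (r * s - u) := by
      rw [hB]; field_simp
    have h5 : 0 ≤ φ' s / s * (r * s - u) := mul_nonneg h2 (by linarith)
    have h6 : (φ' r / r + φ' s / s) * (r * s - u)
        = φ' r / r * (r * s - u) + φ' s / s * (r * s - u) := by ring
    linarith
  -- combine
  have hdd : φ'' d ≤ K * φ'' r := by
    have h1 : φ'' d ≤ φ'' (r + s) :=
      hm2 (Set.mem_Ioi.2 hd) (Set.mem_Ioi.2 (by linarith)) hdrs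
    have h2 : φ'' (r + s) ≤ φ'' (2 * r) :=
      hm2 (Set.mem_Ioi.2 (by linarith)) (Set.mem_Ioi.2 (by linarith)) (by linarith)
    have h3 := hdbl r hrpos
    linarith
  have hVT : φ' r * r + φ' s * s - (φ' r / r + φ' s / s) * u
      = (φ' r - φ' s) * (r - s) + (φ' r / r + φ' s / s) * (r * s - u) := by
    have hr0 : r ≠ 0 := hrpos.ne'
    have hs0 : s ≠ 0 := hs.ne'
    field_simp
    ring
  have hc1 : φ'' r * A / M ≤ φ'' r * A / (4 * K) :=
    div_le_div_of_nonneg_left (mul_nonneg hppr hAnn) (by linarith) hM1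
  have hc2 : φ'' r * B / M ≤ φ'' r * B / (2 * C₂) :=
    div_le_div_of_nonneg_left (mul_nonneg hppr hBnn) (by linarith) hM2
  have hsum : φ'' r * d ^ 2 / M = φ'' r * A / M + φ'' r * B / M := by
    rw [hd2]; ring
  have hfin : φ'' d * d ^ 2 / (K * M) ≤ φ'' r * d ^ 2 / M := by
    rw [div_le_div_iff₀ (by positivity) hMpos]
    calc φ'' d * d ^ 2 * M ≤ (K * φ'' r) * d ^ 2 * M := by
          apply mul_le_mul_of_nonneg_right (mul_le_mul_of_nonneg_right hdd (sq_nonneg d)) hMpos.le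
      _ = φ'' r * d ^ 2 * (K * M) := by ring
  rw [ge_iff_le, hVT]
  calc φ'' d * d ^ 2 / (K * M) ≤ φ'' r * d ^ 2 / M := hfin
    _ = φ'' r * A / M + φ'' r * B / M := hsum
    _ ≤ φ'' r * A / (4 * K) + φ'' r * B / (2 * C₂) := add_le_add hc1 hc2
    _ ≤ (φ' r - φ' s) * (r - s) + (φ' r / r + φ' s / s) * (r * s - u) := add_le_add hT1 hT2


theorem monotonicity_formula_phi_second_deriv_increasing (N : ℕ)
    (φ φ' φ'' : ℝ → ℝ)
    (hconv : ConvexOn ℝ (Set.Ici 0) φ)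
    (h0 : φ 0 = 0)
    (hmono : MonotoneOn φ (Set.Ici 0))
    (hnonneg : ∀ t, 0 ≤ t → 0 ≤ φ t)
    (hcont : ContinuousOn φ (Set.Ici 0))
    (hsm : StrictMonoOn φ (Set.Ici 0))
    (hd1 : ∀ t : ℝ, 0 < t → HasDerivAt φ (φ' t) t)
    (hd2 : ∀ t : ℝ, 0 < t → HasDerivAt φ' (φ'' t) t)
    (hc2 : ContinuousOn φ'' (Set.Ioi 0))
    (C₁ C₂ : ℝ) (hC₁ : 0 < C₁) (hC₂ : 0 < C₂)
    (hcomp : ∀ t : ℝ, 0 < t → C₁ * φ' t ≤ t * φ'' t ∧ t * φ'' t ≤ C₂ * φ' t)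
    (hincr : MonotoneOn φ'' (Set.Ioi 0)) :
    ∃ C : ℝ, 0 < C ∧ ∀ ξ η : EuclideanSpace ℝ (Fin N),
      ⟪aPhi φ' ξ - aPhi φ' η, ξ - η⟫ ≥ φ'' ‖ξ - η‖ * ‖ξ - η‖ ^ 2 / C := by
  -- φ' is nonnegative on (0,∞)
  have hφ'nonneg : ∀ t, 0 < t → 0 ≤ φ' t := by
    intro t ht
    have h1 : Filter.Tendsto (slope φ t) (nhdsWithin t (Set.Ioi t)) (nhds (φ' t)) :=
      (hasDerivAt_iff_tendsto_slope.1 (hd1 t ht)).mono_left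
        (nhdsWithin_mono t fun x hx => Set.mem_compl_singleton_iff.2 (ne_of_gt hx))
    refine ge_of_tendsto h1 ?_
    filter_upwards [self_mem_nhdsWithin] with x hx
    have hx' : t < x := hx
    rw [slope_def_field]
    apply div_nonneg _ (by linarith)
    have := hmono (Set.mem_Ici.2 ht.le) (Set.mem_Ici.2 (ht.trans hx').le) hx'.le
    linarith
  have hφ''nonneg : ∀ t, 0 < t → 0 ≤ φ'' t := by
    intro t ht
    nlinarith [(hcomp t ht).1, hφ'nonneg t ht, mul_pos hC₁ ht]
  -- mean value theorem for φ'
  have hmvt : ∀ a b, 0 < a → a < b → ∃ c, a < c ∧ c < b ∧ φ' b - φ' a = φ'' c * (b - a) := by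
    intro a b ha hab
    have hco : ContinuousOn φ' (Set.Icc a b) := fun x hx =>
      ((hd2 x (lt_of_lt_of_le ha hx.1)).continuousAt).continuousWithinAt
    obtain ⟨c, hc, hceq⟩ := exists_hasDerivAt_eq_slope φ' φ'' hab hco
      (fun x hx => hd2 x (ha.trans hx.1))
    refine ⟨c, hc.1, hc.2, ?_⟩
    rw [hceq]
    exact (div_mul_cancel₀ _ (sub_ne_zero.2 hab.ne')).symm
  -- φ' is monotone on (0,∞)
  have hm1 : MonotoneOn φ' (Set.Ioi 0) := by
    intro a ha b hb hab
    rcases eq_or_lt_of_le hab with rfl | h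
    · exact le_rfl
    obtain ⟨c, hc1, hc2, hc3⟩ := hmvt a b ha h
    nlinarith [hφ''nonneg c (lt_trans ha hc1)]
  -- φ' is positive on (0,∞)
  have hφ'pos : ∀ t, 0 < t → 0 < φ' t := by
    intro t ht
    by_contra hle
    push_neg at hle
    have hco : ContinuousOn φ (Set.Icc (t/2) t) :=
      hcont.mono (fun x hx => le_trans (by linarith) hx.1)
    obtain ⟨c, hc, hceq⟩ := exists_hasDerivAt_eq_slope φ φ' (by linarith : t/2 < t) hco
      (fun x hx => hd1 x (by linarith [hx.1]))
    have h2 : φ (t/2) < φ t := hsm (Set.mem_Ici.2 (by linarith)) (Set.mem_Ici.2 ht.le) (by linarith)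
    have h3 : 0 < φ' c := by
      rw [hceq]; exact div_pos (by linarith) (by linarith)
    have h4 : φ' c ≤ φ' t := hm1 (Set.mem_Ioi.2 (by linarith [hc.1])) (Set.mem_Ioi.2 ht) hc.2.le
    linarith
  -- doubling for φ'
  have hdblp : ∀ t, 0 < t → φ' (2*t) ≤ Real.exp (C₂ * Real.log 2) * φ' t := by
    intro t ht
    have hgd : ∀ x, 0 < x → HasDerivAt (fun y => C₂ * Real.log y - Real.log (φ' y))
        (C₂ * x⁻¹ - φ'' x / φ' x) x := fun x hx =>
      ((Real.hasDerivAt_log hx.ne').const_mul C₂).sub ((hd2 x hx).log (hφ'pos x hx).ne')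
    have hco : ContinuousOn (fun y => C₂ * Real.log y - Real.log (φ' y)) (Set.Icc t (2*t)) :=
      fun x hx => ((hgd x (lt_of_lt_of_le ht hx.1)).continuousAt).continuousWithinAt
    obtain ⟨c, hc, hceq⟩ := exists_hasDerivAt_eq_slope
      (fun y => C₂ * Real.log y - Real.log (φ' y)) (fun x => C₂ * x⁻¹ - φ'' x / φ' x)
      (by linarith : t < 2*t) hco (fun x hx => hgd x (ht.trans hx.1))
    have hcpos : 0 < c := ht.trans hc.1
    have h1 : 0 ≤ C₂ * c⁻¹ - φ'' c / φ' c := by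
      have h2 := (hcomp c hcpos).2
      have h4 : c⁻¹ * (c * φ'' c) ≤ c⁻¹ * (C₂ * φ' c) :=
        mul_le_mul_of_nonneg_left h2 (inv_nonneg.2 hcpos.le)
      have h5 : c⁻¹ * (c * φ'' c) = φ'' c := by field_simp
      have h3 : φ'' c / φ' c ≤ C₂ * c⁻¹ := by
        rw [div_le_iff₀ (hφ'pos c hcpos)]
        have h6 : c⁻¹ * (C₂ * φ' c) = C₂ * c⁻¹ * φ' c := by ring
        rw [h5, h6] at h4
        linarith
      linarith
    have hslope : 0 ≤ ((fun y => C₂ * Real.log y - Real.log (φ' y)) (2*t)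
        - (fun y => C₂ * Real.log y - Real.log (φ' y)) t) / (2*t - t) := by
      rw [← hceq]; exact h1
    have hpos : (0:ℝ) < 2*t - t := by linarith
    have h6 : 0 ≤ ((fun y => C₂ * Real.log y - Real.log (φ' y)) (2*t)
        - (fun y => C₂ * Real.log y - Real.log (φ' y)) t) / (2*t - t) * (2*t - t) :=
      mul_nonneg hslope hpos.le
    rw [div_mul_cancel₀ _ hpos.ne'] at h6
    simp only at h6
    have hlog2 : Real.log (2*t) = Real.log 2 + Real.log t := Real.log_mul two_ne_zero ht.ne'
    have hdist : C₂ * (Real.log 2 + Real.log t) = C₂ * Real.log 2 + C₂ * Real.log t := by ring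
    have h7 : Real.log (φ' (2*t)) ≤ C₂ * Real.log 2 + Real.log (φ' t) := by
      rw [hlog2, hdist] at h6
      linarith
    calc φ' (2*t) = Real.exp (Real.log (φ' (2*t))) :=
          (Real.exp_log (hφ'pos _ (by linarith))).symm
      _ ≤ Real.exp (C₂ * Real.log 2 + Real.log (φ' t)) := Real.exp_le_exp.2 h7
      _ = Real.exp (C₂ * Real.log 2) * φ' t := by
          rw [Real.exp_add, Real.exp_log (hφ'pos t ht)]
  set E := Real.exp (C₂ * Real.log 2) with hE
  have hEpos : 0 < E := Real.exp_pos _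
  set K := E * C₂ / (2 * C₁) with hKdef
  have hK : 0 < K := by positivity
  -- doubling for φ''
  have hdbl : ∀ t, 0 < t → φ'' (2*t) ≤ K * φ'' t := by
    intro t ht
    have h1 := (hcomp (2*t) (by linarith)).2
    have h2 := hdblp t ht
    have h3 := (hcomp t ht).1
    have h4 : 2*t*φ'' (2*t) ≤ C₂ * (E * φ' t) := by nlinarith
    have h5 : C₁ * (2*t*φ'' (2*t)) ≤ C₂ * E * (t * φ'' t) := by
      nlinarith [mul_le_mul_of_nonneg_left h4 hC₁.le,
        mul_le_mul_of_nonneg_left h3 (by positivity : (0:ℝ) ≤ C₂ * E)]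
    rw [← mul_le_mul_iff_right₀ (show (0:ℝ) < 2*C₁*t by positivity)]
    have h7 : 2*C₁*t*(K*φ'' t) = C₂ * E * (t * φ'' t) := by
      rw [hKdef]; field_simp
    rw [h7]
    nlinarith
  -- the constant
  refine ⟨max (K * max (4 * K) (2 * C₂)) C₂, lt_of_lt_of_le hC₂ (le_max_right _ _), ?_⟩
  set C := max (K * max (4 * K) (2 * C₂)) C₂ with hCdef
  have hCpos : 0 < C := lt_of_lt_of_le hC₂ (le_max_right _ _)
  have hKM : 0 < K * max (4 * K) (2 * C₂) := by positivity
  have hinner : ∀ ξ η : EuclideanSpace ℝ (Fin N), ξ ≠ 0 → η ≠ 0 →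
      ⟪aPhi φ' ξ - aPhi φ' η, ξ - η⟫ =
        φ' ‖ξ‖ * ‖ξ‖ + φ' ‖η‖ * ‖η‖ - (φ' ‖ξ‖ / ‖ξ‖ + φ' ‖η‖ / ‖η‖) * ⟪ξ, η⟫ := by
    intro ξ η hξ hη
    have hnξ : ‖ξ‖ ≠ 0 := norm_ne_zero_iff.2 hξ
    have hnη : ‖η‖ ≠ 0 := norm_ne_zero_iff.2 hη
    rw [aPhi, aPhi, if_neg hξ, if_neg hη, inner_sub_left, inner_sub_right, inner_sub_right,
      real_inner_smul_left, real_inner_smul_left, real_inner_smul_left, real_inner_smul_left,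
      real_inner_self_eq_norm_sq, real_inner_self_eq_norm_sq, real_inner_comm η ξ]
    field_simp
    ring
  intro ξ η
  by_cases hxe : ξ = η
  · subst hxe
    simp [sub_self]
  by_cases hη0 : η = 0
  · subst hη0
    have hξ0 : ξ ≠ 0 := by simpa using hxe
    have hr : 0 < ‖ξ‖ := norm_pos_iff.2 hξ0
    have hL : ⟪aPhi φ' ξ - aPhi φ' (0 : EuclideanSpace ℝ (Fin N)), ξ - 0⟫
        = φ' ‖ξ‖ * ‖ξ‖ := by
      rw [aPhi, aPhi, if_neg hξ0, if_pos rfl, sub_zero, sub_zero, real_inner_smul_left,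
        real_inner_self_eq_norm_sq]
      field_simp
    rw [hL, sub_zero]
    have h1 : φ'' ‖ξ‖ * ‖ξ‖ ^ 2 / C ≤ φ'' ‖ξ‖ * ‖ξ‖ ^ 2 / C₂ :=
      div_le_div_of_nonneg_left (mul_nonneg (hφ''nonneg _ hr) (sq_nonneg _)) hC₂
        (le_max_right _ _)
    have h2 : φ'' ‖ξ‖ * ‖ξ‖ ^ 2 / C₂ ≤ φ' ‖ξ‖ * ‖ξ‖ := by
      rw [div_le_iff₀ hC₂]
      nlinarith [(hcomp ‖ξ‖ hr).2, hφ'nonneg ‖ξ‖ hr]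
    linarith
  by_cases hξ0 : ξ = 0
  · subst hξ0
    have hs : 0 < ‖η‖ := norm_pos_iff.2 hη0
    have hL : ⟪aPhi φ' (0 : EuclideanSpace ℝ (Fin N)) - aPhi φ' η, (0:EuclideanSpace ℝ (Fin N)) - η⟫
        = φ' ‖η‖ * ‖η‖ := by
      rw [aPhi, aPhi, if_pos rfl, if_neg hη0, zero_sub, zero_sub, inner_neg_neg,
        real_inner_smul_left, real_inner_self_eq_norm_sq]
      field_simp
    rw [hL, zero_sub, norm_neg]
    have h1 : φ'' ‖η‖ * ‖η‖ ^ 2 / C ≤ φ'' ‖η‖ * ‖η‖ ^ 2 / C₂ :=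
      div_le_div_of_nonneg_left (mul_nonneg (hφ''nonneg _ hs) (sq_nonneg _)) hC₂
        (le_max_right _ _)
    have h2 : φ'' ‖η‖ * ‖η‖ ^ 2 / C₂ ≤ φ' ‖η‖ * ‖η‖ := by
      rw [div_le_iff₀ hC₂]
      nlinarith [(hcomp ‖η‖ hs).2, hφ'nonneg ‖η‖ hs]
    linarith
  -- generic case
  have hr : 0 < ‖ξ‖ := norm_pos_iff.2 hξ0
  have hs : 0 < ‖η‖ := norm_pos_iff.2 hη0
  have hd : 0 < ‖ξ - η‖ := norm_pos_iff.2 (sub_ne_zero.2 hxe)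
  have hdrs : ‖ξ - η‖ ≤ ‖ξ‖ + ‖η‖ := norm_sub_le _ _
  have hu : ⟪ξ, η⟫ ≤ ‖ξ‖ * ‖η‖ := real_inner_le_norm _ _
  have hd2' : ‖ξ - η‖ ^ 2 = (‖ξ‖ - ‖η‖) ^ 2 + 2 * (‖ξ‖ * ‖η‖ - ⟪ξ, η⟫) := by
    rw [norm_sub_sq_real]; ring
  have hRHS : φ'' ‖ξ - η‖ * ‖ξ - η‖ ^ 2 / C ≤
      φ'' ‖ξ - η‖ * ‖ξ - η‖ ^ 2 / (K * max (4 * K) (2 * C₂)) :=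
    div_le_div_of_nonneg_left (mul_nonneg (hφ''nonneg _ hd) (sq_nonneg _)) hKM
      (le_max_left _ _)
  rw [hinner ξ η hξ0 hη0]
  rcases le_total ‖η‖ ‖ξ‖ with hcase | hcase
  · have := keyScalar φ' φ'' C₂ K hC₂ hK hφ'pos hφ''nonneg hm1 hincr hdbl
      (fun t ht => (hcomp t ht).2) hmvt ‖ξ‖ ‖η‖ ⟪ξ, η⟫ ‖ξ - η‖ hs hcase hu hd2' hd hdrs
    linarith
  · have hu' : ⟪η, ξ⟫ ≤ ‖η‖ * ‖ξ‖ := by rw [real_inner_comm]; linarith [hu]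
    have hd2'' : ‖ξ - η‖ ^ 2 = (‖η‖ - ‖ξ‖) ^ 2 + 2 * (‖η‖ * ‖ξ‖ - ⟪η, ξ⟫) := by
      rw [norm_sub_sq_real, real_inner_comm]; ring
    have := keyScalar φ' φ'' C₂ K hC₂ hK hφ'pos hφ''nonneg hm1 hincr hdbl
      (fun t ht => (hcomp t ht).2) hmvt ‖η‖ ‖ξ‖ ⟪η, ξ⟫ ‖ξ - η‖ hr hcase hu' hd2'' hd
      (by linarith)
    rw [real_inner_comm ξ η] at this
    linarith
end

section
/- Let φ(t) = t^p log(e + t) with p ≥ 2. Then φ'' is increasing on (0, ∞). -/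
open Real Set Filter

noncomputable def f1aux (p t : ℝ) : ℝ :=
  p * (t ^ (p-1) * Real.log (Real.exp 1 + t)) + t ^ p * (Real.exp 1 + t)⁻¹

noncomputable def f2aux (p t : ℝ) : ℝ :=
  p * (p-1) * (t ^ (p-2) * Real.log (Real.exp 1 + t))
    + 2 * p * (t ^ (p-1) * (Real.exp 1 + t)⁻¹)
    - t ^ p * ((Real.exp 1 + t)⁻¹) ^ 2

noncomputable def f3aux (p t : ℝ) : ℝ :=
  p * (p-1) * (p-2) * (t ^ (p-3) * Real.log (Real.exp 1 + t))
    + 3 * p * (p-1) * (t ^ (p-2) * (Real.exp 1 + t)⁻¹)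
    - 3 * p * (t ^ (p-1) * ((Real.exp 1 + t)⁻¹) ^ 2)
    + 2 * (t ^ p * ((Real.exp 1 + t)⁻¹) ^ 3)

lemma hEt_pos (t : ℝ) (ht : 0 < t) : (0:ℝ) < Real.exp 1 + t := by
  have := Real.exp_pos 1; linarith

lemma hlog_deriv (t : ℝ) (ht : 0 < t) :
    HasDerivAt (fun t : ℝ => Real.log (Real.exp 1 + t)) ((Real.exp 1 + t)⁻¹) t := by
  have h := (((hasDerivAt_id t).const_add (Real.exp 1)).log (hEt_pos t ht).ne')
  simpa using h

lemma hinv_deriv (t : ℝ) (ht : 0 < t) :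
    HasDerivAt (fun t : ℝ => (Real.exp 1 + t)⁻¹) (-((Real.exp 1 + t)⁻¹)^2) t := by
  have h := ((hasDerivAt_id t).const_add (Real.exp 1)).inv (hEt_pos t ht).ne'
  refine h.congr_deriv ?_
  simp only [id]
  field_simp

lemma hpow_deriv (q t : ℝ) (ht : 0 < t) :
    HasDerivAt (fun t : ℝ => t ^ q) (q * t ^ (q-1)) t :=
  Real.hasDerivAt_rpow_const (Or.inl ht.ne')

lemma d1 (p t : ℝ) (ht : 0 < t) :
    HasDerivAt (fun t : ℝ => t ^ p * Real.log (Real.exp 1 + t)) (f1aux p t) t := by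
  have h := (hpow_deriv p t ht).mul (hlog_deriv t ht)
  refine h.congr_deriv ?_
  unfold f1aux; ring

lemma d2 (p t : ℝ) (ht : 0 < t) : HasDerivAt (f1aux p) (f2aux p t) t := by
  have hpow1 : HasDerivAt (fun t : ℝ => t ^ (p-1)) ((p-1) * t ^ (p-2)) t := by
    have h := hpow_deriv (p-1) t ht
    rwa [show p-1-1 = p-2 by ring] at h
  have h := ((hpow1.mul (hlog_deriv t ht)).const_mul p).add
    ((hpow_deriv p t ht).mul (hinv_deriv t ht))
  unfold f1aux f2aux
  refine h.congr_deriv ?_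
  ring

lemma d3 (p t : ℝ) (ht : 0 < t) : HasDerivAt (f2aux p) (f3aux p t) t := by
  have hpow1 : HasDerivAt (fun t : ℝ => t ^ (p-1)) ((p-1) * t ^ (p-2)) t := by
    have h := hpow_deriv (p-1) t ht
    rwa [show p-1-1 = p-2 by ring] at h
  have hpow2 : HasDerivAt (fun t : ℝ => t ^ (p-2)) ((p-2) * t ^ (p-3)) t := by
    have h := hpow_deriv (p-2) t ht
    rwa [show p-2-1 = p-3 by ring] at h
  have h := (((hpow2.mul (hlog_deriv t ht)).const_mul (p*(p-1))).add
    ((hpow1.mul (hinv_deriv t ht)).const_mul (2*p))).sub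
    ((hpow_deriv p t ht).mul ((hinv_deriv t ht).pow 2))
  unfold f2aux f3aux
  refine h.congr_deriv ?_
  simp only [Pi.pow_apply]
  ring

lemma f3_nonneg (p t : ℝ) (hp : 2 ≤ p) (ht : 0 < t) : 0 ≤ f3aux p t := by
  have hEt : (0:ℝ) < Real.exp 1 + t := hEt_pos t ht
  have hu : 0 < (Real.exp 1 + t)⁻¹ := inv_pos.mpr hEt
  have hexp : (1:ℝ) ≤ Real.exp 1 := by
    have := Real.exp_one_gt_d9; linarith
  have hL : 0 ≤ Real.log (Real.exp 1 + t) := Real.log_nonneg (by linarith)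
  have h1 : t ^ (p-1) = t ^ (p-2) * t := by
    rw [← Real.rpow_add_one ht.ne' (p-2)]; ring_nf
  have h2 : t ^ p = t ^ (p-2) * t * t := by
    rw [← h1, ← Real.rpow_add_one ht.ne' (p-1)]; ring_nf
  have hs : t * (Real.exp 1 + t)⁻¹ < 1 := by
    rw [← div_eq_mul_inv]
    exact (div_lt_one hEt).mpr (by linarith)
  have ht3 : 0 < t ^ (p-3) := Real.rpow_pos_of_pos ht _
  have ht2 : 0 < t ^ (p-2) := Real.rpow_pos_of_pos ht _
  have key : 0 ≤ 3*p*(p-1) - 3*p*(t*(Real.exp 1 + t)⁻¹)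
      + 2*(t*(Real.exp 1 + t)⁻¹)^2 := by
    nlinarith [mul_pos ht hu]
  have hA : 0 ≤ p*(p-1)*(p-2) :=
    mul_nonneg (mul_nonneg (by linarith) (by linarith)) (by linarith)
  have hB : 0 ≤ t ^ (p-3) * Real.log (Real.exp 1 + t) := mul_nonneg ht3.le hL
  have hAB := mul_nonneg hA hB
  have hC := mul_nonneg (mul_nonneg ht2.le hu.le) key
  unfold f3aux
  rw [h1, h2]
  nlinarith [hAB, hC]

theorem second_deriv_increasing_p_log (p : ℝ) (hp : 2 ≤ p) :
    MonotoneOn (deriv (deriv (fun t : ℝ => t ^ p * Real.log (Real.exp 1 + t))))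
      (Set.Ioi 0) := by
  have h1eq : Set.EqOn (deriv (fun t : ℝ => t ^ p * Real.log (Real.exp 1 + t)))
      (f1aux p) (Set.Ioi 0) := fun t ht => (d1 p t ht).deriv
  have h2eq : Set.EqOn
      (deriv (deriv (fun t : ℝ => t ^ p * Real.log (Real.exp 1 + t))))
      (f2aux p) (Set.Ioi 0) := by
    intro t ht
    have hev : deriv (fun t : ℝ => t ^ p * Real.log (Real.exp 1 + t)) =ᶠ[nhds t]
        f1aux p := Filter.eventuallyEq_of_mem (isOpen_Ioi.mem_nhds ht) h1eq
    rw [hev.deriv_eq, (d2 p t ht).deriv]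
  have hmono : MonotoneOn (f2aux p) (Set.Ioi 0) := by
    apply monotoneOn_of_deriv_nonneg (convex_Ioi 0)
    · exact fun t ht => (d3 p t ht).continuousAt.continuousWithinAt
    · intro t ht
      rw [interior_Ioi] at ht
      exact (d3 p t ht).differentiableAt.differentiableWithinAt
    · intro t ht
      rw [interior_Ioi] at ht
      rw [(d3 p t ht).deriv]
      exact f3_nonneg p t hp ht
  exact hmono.congr h2eq.symm
end
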